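/- Let τ = (1 + √5)/2 and for k ∈ ℤ define λ_k = (⌈k/τ⌉ + kτ)/τ². Then: (i) the map k ↦ λ_k is strictly increasing with λ_0 = 0; (ii) { λ_k : k ∈ ℤ } = Σ^{[0,τ²)} = { a + bτ : a, b ∈ ℤ, a − b/τ ∈ [0, τ²) }; (iii) for every k ∈ ℤ, λ_{k+1} − λ_k ∈ {1, 1/τ}. -/

import Mathlib

open MeasureTheory Set Filter

noncomputable section

/-- The golden mean `τ = (1 + √5)/2`. -/
def tau : ℝ := (1 + Real.sqrt 5) / 2

/-- The cut-and-project model set `Σ^Ω = { a + bτ : a, b ∈ ℤ, a - b/τ ∈ Ω }`. -/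
def SigmaSet (Ω : Set ℝ) : Set ℝ :=
  {x | ∃ a b : ℤ, x = (a : ℝ) + (b : ℝ) * tau ∧ (a : ℝ) - (b : ℝ) / tau ∈ Ω}

/-- The increasing enumeration `λ_k = (⌈k/τ⌉ + kτ)/τ²` of the rescaled Fibonacci
chain `Σ^{[0,τ²)}`. -/
def fibChain (k : ℤ) : ℝ := ((⌈(k : ℝ) / tau⌉ : ℝ) + (k : ℝ) * tau) / tau ^ 2

/-!
Write a point of `ℤ[τ]` as `a + bτ = (c + kτ)/τ²` with `(c, k) = (a + b, a + 2b)`, a unimodular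
change of coordinates. In the new coordinates the star image is `a - b/τ = τ² (c - k/τ)`, so the
window condition `a - b/τ ∈ [0, τ²)` says `c - k/τ ∈ [0, 1)`, i.e. `c = ⌈k/τ⌉`. Hence each `k`
contributes exactly the point `λ_k`, and `λ_{k+1} - λ_k = (δ + τ)/τ²` where `δ ∈ {0, 1}` is the
increment of `⌈k/τ⌉`, giving the gaps `1/τ` and `1`.
-/

theorem tau_eq_goldenRatio : tau = Real.goldenRatio := rfl

theorem tau_sq : tau ^ 2 = tau + 1 := Real.goldenRatio_sq

theorem tau_pos : 0 < tau := Real.goldenRatio_pos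

theorem one_lt_tau : 1 < tau := Real.one_lt_goldenRatio

theorem inv_tau : tau⁻¹ = tau - 1 := by
  rw [tau_eq_goldenRatio, Real.inv_goldenRatio, ← Real.one_sub_goldenRatio]
  ring

theorem Int.ceil_add_eq_or {R : Type*} [Ring R] [LinearOrder R] [IsStrictOrderedRing R]
    [FloorRing R] {x d : R} (hd₀ : 0 ≤ d) (hd₁ : d ≤ 1) :
    ⌈x + d⌉ = ⌈x⌉ ∨ ⌈x + d⌉ = ⌈x⌉ + 1 := by
  have hlo : ⌈x⌉ ≤ ⌈x + d⌉ := Int.ceil_mono (le_add_of_nonneg_right hd₀)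
  have hhi : ⌈x + d⌉ ≤ ⌈x⌉ + 1 := Int.ceil_add_one x ▸ Int.ceil_mono (add_le_add_right hd₁ x)
  omega

theorem ceil_div_tau_eq_iff {k c : ℤ} :
    ⌈(k : ℝ) / tau⌉ = c ↔ (c : ℝ) - k / tau ∈ Ico 0 1 := by
  rw [Int.ceil_eq_iff, mem_Ico]
  constructor <;> rintro ⟨h₁, h₂⟩ <;> constructor <;> linarith

theorem add_mul_tau_eq (c k : ℤ) :
    ((2 * c - k : ℤ) : ℝ) + ((k - c : ℤ) : ℝ) * tau = (c + k * tau) / tau ^ 2 := by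
  rw [eq_div_iff (pow_pos tau_pos 2).ne']
  push_cast
  linear_combination ((k - c : ℝ) * tau + c) * tau_sq

theorem sub_div_tau_eq (c k : ℤ) :
    ((2 * c - k : ℤ) : ℝ) - ((k - c : ℤ) : ℝ) / tau = tau ^ 2 * (c - k / tau) := by
  simp only [div_eq_mul_inv, inv_tau]
  push_cast
  linear_combination ((k : ℝ) * tau - c) * tau_sq

theorem mem_SigmaSet_iff (Ω : Set ℝ) (x : ℝ) :
    x ∈ SigmaSet Ω ↔ ∃ c k : ℤ, x = (c + k * tau) / tau ^ 2 ∧ tau ^ 2 * (c - k / tau) ∈ Ω := by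
  constructor
  · rintro ⟨a, b, rfl, hΩ⟩
    obtain ⟨c, k, rfl, rfl⟩ : ∃ c k : ℤ, a = 2 * c - k ∧ b = k - c :=
      ⟨a + b, a + 2 * b, by ring, by ring⟩
    exact ⟨c, k, add_mul_tau_eq c k, sub_div_tau_eq c k ▸ hΩ⟩
  · rintro ⟨c, k, rfl, hΩ⟩
    exact ⟨2 * c - k, k - c, (add_mul_tau_eq c k).symm, (sub_div_tau_eq c k).symm ▸ hΩ⟩

theorem range_fibChain : range fibChain = SigmaSet (Ico 0 (tau ^ 2)) := by
  ext x
  have hτ : 0 < tau ^ 2 := pow_pos tau_pos 2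
  have hwindow (y : ℝ) : tau ^ 2 * y ∈ Ico 0 (tau ^ 2) ↔ y ∈ Ico 0 1 := by
    simp only [mem_Ico, mul_nonneg_iff_of_pos_left hτ, mul_lt_iff_lt_one_right hτ]
  simp only [mem_SigmaSet_iff, hwindow, ← ceil_div_tau_eq_iff, mem_range, fibChain]
  constructor
  · rintro ⟨k, rfl⟩
    exact ⟨_, k, rfl, rfl⟩
  · rintro ⟨c, k, rfl, rfl⟩
    exact ⟨k, rfl⟩

theorem fibChain_succ_sub (k : ℤ) :
    fibChain (k + 1) - fibChain k =
      (((⌈((k : ℝ) + 1) / tau⌉ - ⌈(k : ℝ) / tau⌉ : ℤ) : ℝ) + tau) / tau ^ 2 := by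
  simp only [fibChain]
  push_cast
  ring

theorem fibChain_succ_sub_eq_or (k : ℤ) :
    fibChain (k + 1) - fibChain k = 1 ∨ fibChain (k + 1) - fibChain k = 1 / tau := by
  have hstep : 1 / tau ≤ 1 := (div_le_one tau_pos).mpr one_lt_tau.le
  have hceil := Int.ceil_add_eq_or (x := (k : ℝ) / tau) (one_div_pos.mpr tau_pos).le hstep
  rw [← add_div] at hceil
  have := tau_pos.ne'
  rw [fibChain_succ_sub]
  rcases hceil with h | h <;> rw [h]
  · right
    field_simp
    push_cast
    ring
  · left
    rw [div_eq_one_iff_eq (by positivity), tau_sq]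
    push_cast
    ring

theorem fibChain_strictMono : StrictMono fibChain :=
  strictMono_int_of_lt_succ fun k => by
    have := one_div_pos.mpr tau_pos
    rcases fibChain_succ_sub_eq_or k with h | h <;> linarith

/-- the sequence `λ_k = (⌈k/τ⌉ + kτ)/τ²` is strictly increasing with
`λ_0 = 0`, its range is the model set `Σ^{[0,τ²)}`, and consecutive gaps are `1`
or `1/τ`. -/
theorem statement9 :
    (StrictMono fibChain ∧ fibChain 0 = 0) ∧
    Set.range fibChain = SigmaSet (Set.Ico 0 (tau ^ 2)) ∧
    (∀ k : ℤ, fibChain (k + 1) - fibChain k = 1 ∨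
      fibChain (k + 1) - fibChain k = 1 / tau) :=
  ⟨⟨fibChain_strictMono, by simp [fibChain]⟩, range_fibChain, fibChain_succ_sub_eq_or⟩
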